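/- arXiv:2603.18264 — 4 statements merged into one kernel-verified Lean document; each statement's English description precedes it below -/
import Mathlib

section
/- Let A be a semiperfect ring and ξ ∈ A an idempotent. There is a bijection between the set of conjugacy classes of primitive idempotents in A and the disjoint union of the set of conjugacy classes of primitive idempotents in the corner ring ξAξ and the set of conjugacy classes of primitive idempotents in the quotient ring A/(AξA). The bijection sends the conjugacy class X of a primitive idempotent to X ∩ (ξAξ) if X ⊆ AξA, and to its image in A/(AξA) otherwise. -/
section Defs

variable {A : Type*} [Ring A]

/-- An idempotent `e` is primitive if it is nonzero and is not the sum of two nonzero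
orthogonal idempotents. -/
def IsPrimitiveIdem (e : A) : Prop :=
  IsIdempotentElem e ∧ e ≠ 0 ∧
    ∀ a b : A, IsIdempotentElem a → IsIdempotentElem b → a * b = 0 → b * a = 0 →
      a ≠ 0 → b ≠ 0 → a + b ≠ e

/-- Conjugacy of idempotents: `f = u e u⁻¹` for some unit `u`. -/
def IsConjIdem (e f : A) : Prop := ∃ u : Aˣ, f = (u : A) * e * ((u⁻¹ : Aˣ) : A)

/-- An idempotent `e` is local if it is nonzero and the corner ring `eAe` is local. -/
def IsLocalIdem (e : A) : Prop :=
  IsIdempotentElem e ∧ e ≠ 0 ∧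
    ∀ x : A,
      (∃ y : A, y = e * y * e ∧ (e * x * e) * y = e ∧ y * (e * x * e) = e) ∨
      (∃ y : A, y = e * y * e ∧ (e - e * x * e) * y = e ∧ y * (e - e * x * e) = e)

/-- A ring is semiperfect if `1` is a sum of mutually orthogonal local idempotents. -/
def SemiperfectRing' (A : Type*) [Ring A] : Prop :=
  ∃ (n : ℕ) (e : Fin n → A), (∀ i, IsLocalIdem (e i)) ∧
    (∀ i j, i ≠ j → e i * e j = 0) ∧ (∑ i, e i) = 1

/-- Membership in the two-sided ideal `AξA` generated by `ξ`. -/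
def MemIdealGen (ξ x : A) : Prop :=
  ∃ (n : ℕ) (a b : Fin n → A), x = ∑ i, a i * ξ * b i

/-- `e` is a primitive idempotent of the corner ring `ξAξ`. -/
def CornerPrimIdem (ξ e : A) : Prop :=
  IsIdempotentElem e ∧ e = ξ * e * ξ ∧ e ≠ 0 ∧
    ∀ a b : A, IsIdempotentElem a → IsIdempotentElem b →
      a = ξ * a * ξ → b = ξ * b * ξ → a * b = 0 → b * a = 0 →
      a ≠ 0 → b ≠ 0 → a + b ≠ e

/-- Conjugacy in the corner ring `ξAξ` (whose identity element is `ξ`). -/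
def CornerConjIdem (ξ e f : A) : Prop :=
  ∃ u v : A, u = ξ * u * ξ ∧ v = ξ * v * ξ ∧ u * v = ξ ∧ v * u = ξ ∧ f = u * e * v

/-- `x` represents an idempotent of the quotient ring `A/(AξA)`. -/
def ModIdem (ξ x : A) : Prop := MemIdealGen ξ (x * x - x)

/-- `x` represents a primitive idempotent of the quotient ring `A/(AξA)`. -/
def ModPrimIdem (ξ x : A) : Prop :=
  ModIdem ξ x ∧ ¬ MemIdealGen ξ x ∧
    ∀ a b : A, ModIdem ξ a → ModIdem ξ b → MemIdealGen ξ (a * b) → MemIdealGen ξ (b * a) →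
      ¬ MemIdealGen ξ a → ¬ MemIdealGen ξ b → ¬ MemIdealGen ξ (a + b - x)

/-- `x`, `y` represent conjugate idempotents of the quotient ring `A/(AξA)`. -/
def ModConjIdem (ξ x y : A) : Prop :=
  ∃ u v : A, MemIdealGen ξ (u * v - 1) ∧ MemIdealGen ξ (v * u - 1) ∧
    MemIdealGen ξ (u * x * v - y)

end Defs

/-!
In a semiperfect ring every primitive idempotent is local, and two local idempotents `e`, `f`
are conjugate exactly when they are equivalent (`e = pq`, `f = qp` for some `p`, `q`); the
same holds in the corner `ξAξ`, which is again semiperfect. Both facts rest on the exchange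
property: a local idempotent below `E = ∑ gᵢ` is conjugate in `EAE` to some `gᵢ`.

So all three sets of classes are sets of equivalence classes of local idempotents. A local
`e ∈ AξA` is equivalent to an idempotent of `ξAξ`: writing `e = ∑ e aᵢ ξ bᵢ e`, some summand
is a unit of the local ring `eAe`. A local `e ∉ AξA` stays local in `A/AξA`, and equivalence
lifts along `A → A/AξA`, because an element of `eAe` congruent to `e` modulo `AξA` is a unit
of `eAe`. Finally every primitive idempotent of `A/AξA` is conjugate to the image of some `gᵢ`
in a decomposition `1 = ∑ gᵢ` of `A`.
-/

open Finset

section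

variable {R : Type*} [Ring R]

section Corner

variable {E e x y u v : R}

theorem IsIdempotentElem.left_mul_of_corner (hE : IsIdempotentElem E) (h : E * x * E = x) :
    E * x = x := by
  rw [← h, ← mul_assoc, ← mul_assoc, hE]

theorem IsIdempotentElem.right_mul_of_corner (hE : IsIdempotentElem E) (h : E * x * E = x) :
    x * E = x := by
  rw [← h, mul_assoc, hE]

theorem IsIdempotentElem.corner_trans (hE : IsIdempotentElem E) (he : E * e * E = e)
    (hx : e * x * e = x) : E * x * E = x := by
  rw [← hx, ← mul_assoc, ← mul_assoc, hE.left_mul_of_corner he, mul_assoc,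
    hE.right_mul_of_corner he]

theorem IsIdempotentElem.corner_mul_mul (hE : IsIdempotentElem E) (x : R) :
    E * (E * x * E) * E = E * x * E := by
  rw [← mul_assoc, ← mul_assoc, hE.eq, mul_assoc, hE.eq]

theorem one_mul_mul_one (x : R) : 1 * x * 1 = x := by
  rw [one_mul, mul_one]

theorem eq_corner_of_mul_eq (h₁ : E * x = x) (h₂ : x * E = x) : x = E * x * E := by
  rw [h₁, h₂]

theorem conj_mul_conj (hvu : v * u = E) (hx : x * E = x) :
    u * x * v * (u * y * v) = u * (x * y) * v := by
  calc u * x * v * (u * y * v) = u * (x * (v * u)) * y * v := by noncomm_ring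
    _ = u * (x * y) * v := by rw [hvu, hx]; noncomm_ring

end Corner

section LocalIdem

variable {e z : R}

-- Shaped like the disjuncts of `IsLocalIdem`, so that `hl.2.2 x` is a disjunction of these.
def IsCornerUnit (e z : R) : Prop := ∃ y : R, y = e * y * e ∧ z * y = e ∧ y * z = e

def IsIdempotentElem.toCorner (he : IsIdempotentElem e) (hz : e * z * e = z) : he.Corner :=
  ⟨z, z, hz⟩

def IsIdempotentElem.cornerVal (he : IsIdempotentElem e) : he.Corner →+ R :=
  AddMonoidHom.mk' (M := he.Corner) (fun a => a.1) fun _ _ => rfl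

theorem isCornerUnit_iff_isUnit (he : IsIdempotentElem e) (hz : e * z * e = z) :
    IsCornerUnit e z ↔ IsUnit (he.toCorner hz) := by
  refine Iff.trans ?_ isUnit_iff_exists.symm
  constructor
  · rintro ⟨y, hy, hzy, hyz⟩
    exact ⟨⟨y, y, hy.symm⟩, Subtype.ext hzy, Subtype.ext hyz⟩
  · rintro ⟨⟨y, r, rfl⟩, hzy, hyz⟩
    exact ⟨e * r * e, (he.corner_mul_mul r).symm, congrArg Subtype.val hzy,
      congrArg Subtype.val hyz⟩

theorem IsLocalIdem.isCornerUnit_or (hl : IsLocalIdem e) (hz : e * z * e = z) :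
    IsCornerUnit e z ∨ IsCornerUnit e (e - z) := by
  have := hl.2.2 z
  rwa [hz] at this

theorem IsLocalIdem.isLocalRing (hl : IsLocalIdem e) : IsLocalRing hl.1.Corner := by
  have : Nontrivial hl.1.Corner := ⟨0, 1, fun h => hl.2.1 (congrArg Subtype.val h).symm⟩
  refine IsLocalRing.of_isUnit_or_isUnit_one_sub_self fun ⟨z, r, hr⟩ => ?_
  have hz : e * z * e = z := hr ▸ hl.1.corner_mul_mul r
  have hez : e * (e - z) * e = e - z := by rw [mul_sub, sub_mul, hl.1.eq, hl.1.eq, hz]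
  rcases hl.isCornerUnit_or hz with h | h
  · exact .inl ((isCornerUnit_iff_isUnit hl.1 hz).mp h)
  · exact .inr ((isCornerUnit_iff_isUnit hl.1 hez).mp h)

theorem IsLocalIdem.exists_isCornerUnit_of_sum_eq (hl : IsLocalIdem e) {ι : Type*}
    {s : Finset ι} {x : ι → R} (hx : ∀ i ∈ s, e * x i * e = x i) (hs : ∑ i ∈ s, x i = e) :
    ∃ i ∈ s, IsCornerUnit e (x i) := by
  classical
  have := hl.isLocalRing
  let y : ι → hl.1.Corner := fun i => if h : i ∈ s then hl.1.toCorner (hx i h) else 0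
  have hy : ∑ i ∈ s, y i = 1 := by
    refine Subtype.ext ((map_sum hl.1.cornerVal y s).trans ?_)
    exact (sum_congr rfl fun i hi => by simp only [y, dif_pos hi]; rfl).trans hs
  obtain ⟨i, hi, hu⟩ := IsLocalRing.exists_of_isUnit_sum (hy ▸ isUnit_one)
  refine ⟨i, hi, (isCornerUnit_iff_isUnit hl.1 (hx i hi)).mpr ?_⟩
  simpa [y, hi] using hu

theorem IsLocalIdem.eq_zero_or_eq (hl : IsLocalIdem e) (hz : IsIdempotentElem z)
    (hze : e * z * e = z) : z = 0 ∨ z = e := by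
  have := hl.isLocalRing
  let w := hl.1.toCorner hze
  have hw : IsIdempotentElem w := Subtype.ext hz.eq
  rcases IsLocalRing.isUnit_or_isUnit_of_add_one (add_sub_cancel w 1) with h | h
  · exact .inr (congrArg Subtype.val ((IsIdempotentElem.iff_eq_one_of_isUnit h).mp hw))
  · have := congrArg Subtype.val ((IsIdempotentElem.iff_eq_one_of_isUnit h).mp hw.one_sub)
    exact .inl (sub_eq_self.mp this)

end LocalIdem

section IdemEquiv

variable {e g x y z : R}

/-- Equivalent idempotents, i.e. `xR ≅ yR` as right `R`-modules. -/
def IdemEquiv (x y : R) : Prop :=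
  IsIdempotentElem x ∧ IsIdempotentElem y ∧ ∃ p q : R, p * q = x ∧ q * p = y

theorem IdemEquiv.symm (h : IdemEquiv x y) : IdemEquiv y x :=
  let ⟨hx, hy, p, q, hpq, hqp⟩ := h
  ⟨hy, hx, q, p, hqp, hpq⟩

theorem IdemEquiv.exists_absorbing (h : IdemEquiv x y) : ∃ p q : R, p * q = x ∧ q * p = y ∧
    x * p = p ∧ p * y = p ∧ y * q = q ∧ q * x = q := by
  obtain ⟨hx, hy, p, q, hpq, hqp⟩ := h
  refine ⟨p * q * p, q * p * q, ?_, ?_, ?_, ?_, ?_, ?_⟩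
  · calc p * q * p * (q * p * q) = p * q * (p * q) * (p * q) := by noncomm_ring
      _ = x := by rw [hpq, hx.eq, hx.eq]
  · calc q * p * q * (p * q * p) = q * p * (q * p) * (q * p) := by noncomm_ring
      _ = y := by rw [hqp, hy.eq, hy.eq]
  · rw [hpq, ← mul_assoc, hx.eq]
  · rw [mul_assoc p q p, hqp, mul_assoc, hy.eq]
  · rw [hqp, ← mul_assoc, hy.eq]
  · rw [mul_assoc q p q, hpq, mul_assoc, hx.eq]

theorem IdemEquiv.trans (h₁ : IdemEquiv x y) (h₂ : IdemEquiv y z) : IdemEquiv x z := by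
  obtain ⟨p, q, hpq, hqp, -, hpy, -, -⟩ := h₁.exists_absorbing
  obtain ⟨p', q', hpq', hqp', -, -, -, hqy⟩ := h₂.exists_absorbing
  refine ⟨h₁.1, h₂.2.1, p * p', q' * q, ?_, ?_⟩
  · rw [mul_assoc, ← mul_assoc p', hpq', ← mul_assoc, hpy, hpq]
  · rw [mul_assoc, ← mul_assoc q, hqp, ← mul_assoc, hqy, hqp']

theorem IdemEquiv.of_mul_eq {p q : R} (he : IsIdempotentElem e) (hp : e * p = p)
    (h : p * q = e) : IdemEquiv e (q * p) := by
  refine ⟨he, ?_, p, q, h, rfl⟩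
  rw [IsIdempotentElem, mul_assoc, ← mul_assoc p, h, hp]

theorem IdemEquiv.ne_zero (h : IdemEquiv x y) (hx : x ≠ 0) : y ≠ 0 := by
  obtain ⟨hx', -, p, q, hpq, hqp⟩ := h
  rintro rfl
  refine hx ?_
  rw [← hx'.eq, ← hpq, mul_assoc, ← mul_assoc q, hqp, zero_mul, mul_zero]

theorem IsCornerUnit.of_absorbing {p q b : R} (hy : IsIdempotentElem y) (hqp : q * p = y)
    (hpy : p * y = p) (hyq : y * q = q) (hqx : q * x = q) (hb : y * b * y = b)
    (h : IsCornerUnit x (p * b * q)) : IsCornerUnit y b := by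
  obtain ⟨c, -, h₁, h₂⟩ := h
  refine ⟨q * c * p, ?_, ?_, ?_⟩
  · calc q * c * p = y * q * c * (p * y) := by rw [hyq, hpy, mul_assoc]
      _ = y * (q * c * p) * y := by noncomm_ring
  · calc b * (q * c * p) = q * p * b * (q * c * p) := by rw [hqp, hy.left_mul_of_corner hb]
      _ = q * (p * b * q * c) * p := by noncomm_ring
      _ = y := by rw [h₁, hqx, hqp]
  · calc q * c * p * b = q * c * p * b * (q * p) := by
          rw [hqp, mul_assoc _ b y, hy.right_mul_of_corner hb]
      _ = q * (c * (p * b * q)) * p := by noncomm_ring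
      _ = y := by rw [h₂, hqx, hqp]

theorem IdemEquiv.isLocalIdem (h : IdemEquiv x y) (hl : IsLocalIdem x) : IsLocalIdem y := by
  obtain ⟨p, q, hpq, hqp, hxp, hpy, hyq, hqx⟩ := h.exists_absorbing
  have hy := h.2.1
  refine ⟨hy, h.ne_zero hl.2.1, fun z => ?_⟩
  have hb : y * (y * z * y) * y = y * z * y := hy.corner_mul_mul z
  have hb' : y * (y - y * z * y) * y = y - y * z * y := by
    rw [mul_sub, sub_mul, hy.eq, hy.eq, hb]
  have hpbq : x * (p * (y * z * y) * q) * x = p * (y * z * y) * q := by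
    rw [← mul_assoc, ← mul_assoc, hxp, mul_assoc _ q x, hqx]
  have hcompl : x - p * (y * z * y) * q = p * (y - y * z * y) * q := by
    rw [mul_sub, sub_mul, hpy, hpq]
  rcases hl.isCornerUnit_or hpbq with h | h
  · exact .inl (h.of_absorbing hy hqp hpy hyq hqx hb)
  · exact .inr ((hcompl ▸ h).of_absorbing hy hqp hpy hyq hqx hb')

theorem IdemEquiv.exists_corner_of_isCornerUnit {a b : R} (hg : IsIdempotentElem g)
    (he : IsIdempotentElem e) (h : IsCornerUnit g (g * (a * e * b) * g)) :
    ∃ f, e * f * e = f ∧ IdemEquiv g f := by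
  obtain ⟨c, hc, hc₁, -⟩ := h
  refine ⟨e * b * c * (g * a * e), ?_, IdemEquiv.of_mul_eq hg ?_ ?_⟩
  · calc e * (e * b * c * (g * a * e)) * e = (e * e) * b * c * g * a * (e * e) := by noncomm_ring
      _ = _ := by rw [he.eq]; noncomm_ring
  · rw [← mul_assoc, ← mul_assoc, hg.eq]
  · calc g * a * e * (e * b * c) = g * (a * (e * e) * b) * (g * c) := by
          rw [hg.left_mul_of_corner hc.symm]; noncomm_ring
      _ = g := by rw [he.eq, ← mul_assoc, hc₁]

end IdemEquiv

section CornerConjIdem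

variable {E a b e g x y z : R}

theorem CornerConjIdem.refl (hE : IsIdempotentElem E) (hx : E * x * E = x) :
    CornerConjIdem E x x :=
  ⟨E, E, by rw [hE.eq, hE.eq], by rw [hE.eq, hE.eq], hE.eq, hE.eq, hx.symm⟩

theorem CornerConjIdem.symm (hx : E * x * E = x) (h : CornerConjIdem E x y) :
    CornerConjIdem E y x := by
  obtain ⟨u, v, hu, hv, huv, hvu, rfl⟩ := h
  refine ⟨v, u, hv, hu, hvu, huv, ?_⟩
  calc x = v * u * x * (v * u) := by rw [hvu, hx]
    _ = v * (u * x * v) * u := by noncomm_ring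

theorem CornerConjIdem.trans (hE : IsIdempotentElem E) (h₁ : CornerConjIdem E x y)
    (h₂ : CornerConjIdem E y z) : CornerConjIdem E x z := by
  obtain ⟨u, v, hu, hv, huv, hvu, rfl⟩ := h₁
  obtain ⟨u', v', hu', hv', huv', hvu', rfl⟩ := h₂
  refine ⟨u' * u, v * v', ?_, ?_, ?_, ?_, by noncomm_ring⟩
  · exact eq_corner_of_mul_eq (by rw [← mul_assoc, hE.left_mul_of_corner hu'.symm])
      (by rw [mul_assoc, hE.right_mul_of_corner hu.symm])
  · exact eq_corner_of_mul_eq (by rw [← mul_assoc, hE.left_mul_of_corner hv.symm])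
      (by rw [mul_assoc, hE.right_mul_of_corner hv'.symm])
  · rw [mul_assoc, ← mul_assoc u, huv, hE.left_mul_of_corner hv'.symm, huv']
  · rw [mul_assoc, ← mul_assoc v', hvu', hE.left_mul_of_corner hu.symm, hvu]

theorem CornerConjIdem.corner (hE : IsIdempotentElem E) (h : CornerConjIdem E x y) :
    E * y * E = y := by
  obtain ⟨u, v, hu, hv, -, -, rfl⟩ := h
  rw [← mul_assoc, ← mul_assoc, hE.left_mul_of_corner hu.symm, mul_assoc _ v,
    hE.right_mul_of_corner hv.symm]

theorem CornerConjIdem.idemEquiv (hE : IsIdempotentElem E) (hx : IsIdempotentElem x)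
    (hxE : E * x * E = x) (h : CornerConjIdem E x y) : IdemEquiv x y := by
  obtain ⟨u, v, -, -, -, hvu, rfl⟩ := h
  have hxEx : x * E * x = x := by rw [hE.right_mul_of_corner hxE, hx.eq]
  refine ⟨hx, ?_, x * v, u * x, ?_, ?_⟩
  · calc u * x * v * (u * x * v) = u * (x * (v * u) * x) * v := by noncomm_ring
      _ = u * x * v := by rw [hvu, hxEx]
  · calc x * v * (u * x) = x * (v * u) * x := by noncomm_ring
      _ = x := by rw [hvu, hxEx]
  · rw [mul_assoc, ← mul_assoc x, hx.eq, ← mul_assoc]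

theorem cornerConjIdem_of_mul_eq_right (hE : IsIdempotentElem E) (ha : IsIdempotentElem a)
    (hb : IsIdempotentElem b) (haE : E * a * E = a) (hbE : E * b * E = b) (hab : a * b = b)
    (hba : b * a = a) : CornerConjIdem E a b := by
  have hEa := hE.left_mul_of_corner haE
  have haE' := hE.right_mul_of_corner haE
  have hEb := hE.left_mul_of_corner hbE
  have hbE' := hE.right_mul_of_corner hbE
  refine ⟨E - b + a, E - a + b, eq_corner_of_mul_eq ?_ ?_, eq_corner_of_mul_eq ?_ ?_,
    ?_, ?_, ?_⟩ <;>
    simp only [sub_mul, mul_sub, add_mul, mul_add, hE.eq, hEa, haE', hEb, hbE', hab, hba,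
      ha.eq, hb.eq] <;> abel

theorem cornerConjIdem_of_mul_eq_left (hE : IsIdempotentElem E) (ha : IsIdempotentElem a)
    (hb : IsIdempotentElem b) (haE : E * a * E = a) (hbE : E * b * E = b) (hab : a * b = a)
    (hba : b * a = b) : CornerConjIdem E a b := by
  have hEa := hE.left_mul_of_corner haE
  have haE' := hE.right_mul_of_corner haE
  have hEb := hE.left_mul_of_corner hbE
  have hbE' := hE.right_mul_of_corner hbE
  refine ⟨E - a + b, E - b + a, eq_corner_of_mul_eq ?_ ?_, eq_corner_of_mul_eq ?_ ?_,
    ?_, ?_, ?_⟩ <;>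
    simp only [sub_mul, mul_sub, add_mul, mul_add, hE.eq, hEa, haE', hEb, hbE', hab, hba,
      ha.eq, hb.eq] <;> abel

theorem cornerConjIdem_of_orthogonal (hE : IsIdempotentElem E) (haE : E * a * E = a)
    (hbE : E * b * E = b) (hab : a * b = 0) (hba : b * a = 0) (h : IdemEquiv a b) :
    CornerConjIdem E a b := by
  obtain ⟨X, Y, hXY, hYX, haX, hXb, hbY, hYa⟩ := h.exists_absorbing
  have hEa := hE.left_mul_of_corner haE
  have haE' := hE.right_mul_of_corner haE
  have hEb := hE.left_mul_of_corner hbE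
  have hbE' := hE.right_mul_of_corner hbE
  have hEX : E * X = X := by rw [← haX, ← mul_assoc, hEa]
  have hXE : X * E = X := by rw [← hXb, mul_assoc, hbE']
  have hEY : E * Y = Y := by rw [← hbY, ← mul_assoc, hEb]
  have hYE : Y * E = Y := by rw [← hYa, mul_assoc, haE']
  have haY : a * Y = 0 := by rw [← hbY, ← mul_assoc, hab, zero_mul]
  have hXa : X * a = 0 := by rw [← hXb, mul_assoc, hba, mul_zero]
  have hbX : b * X = 0 := by rw [← haX, ← mul_assoc, hba, zero_mul]
  have hYb : Y * b = 0 := by rw [← hYa, mul_assoc, hab, mul_zero]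
  have hXX : X * X = 0 := by rw [← hXb, mul_assoc, ← mul_assoc b, hbX, zero_mul, mul_zero]
  have hYY : Y * Y = 0 := by rw [← hYa, mul_assoc, ← mul_assoc a, haY, zero_mul, mul_zero]
  have ha := h.1
  have hb := h.2.1
  refine ⟨E - a - b + X + Y, E - a - b + X + Y, eq_corner_of_mul_eq ?_ ?_,
    eq_corner_of_mul_eq ?_ ?_, ?_, ?_, ?_⟩ <;>
    simp only [sub_mul, mul_sub, add_mul, mul_add, hE.eq, hEa, haE', hEb, hbE', hEX, hXE, hEY,
      hYE, hab, hba, ha.eq, hb.eq, haX, hXb, hbY, hYa, haY, hXa, hbX, hYb, hXX, hYY, hXY,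
      hYX] <;> abel

theorem cornerConjIdem_of_isCornerUnit (hE : IsIdempotentElem E) (he : IsIdempotentElem e)
    (heE : E * e * E = e) (he0 : e ≠ 0) (hg : IsLocalIdem g) (hgE : E * g * E = g)
    (h : IsCornerUnit e (e * g * e)) : CornerConjIdem E e g := by
  obtain ⟨c, hc, hc₁, hc₂⟩ := h
  have hec : e * c = c := he.left_mul_of_corner hc.symm
  have hce : c * e = c := he.right_mul_of_corner hc.symm
  have hegc : e * g * c = e := by rw [← hec, ← mul_assoc, hc₁]
  have hcge : c * g * e = e := by
    calc c * g * e = c * e * g * e := by rw [hce]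
      _ = c * (e * g * e) := by noncomm_ring
      _ = e := hc₂
  have hcgc : c * g * c = c := by
    calc c * g * c = c * g * (e * c) := by rw [hec]
      _ = c := by rw [← mul_assoc, hcge, hec]
  -- `h = c * g` has `eR = hR` and `Rh = Rg`, which makes `e`, `h` and `h`, `g` conjugate.
  have hh : IsIdempotentElem (c * g) := by
    rw [IsIdempotentElem, ← mul_assoc, hcgc]
  have hEc : E * c = c := by rw [← hec, ← mul_assoc, hE.left_mul_of_corner heE]
  have hhE : E * (c * g) * E = c * g := by
    rw [← mul_assoc, hEc, mul_assoc, hE.right_mul_of_corner hgE]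
  have hgcg : g * (c * g) = g := by
    have hi : IsIdempotentElem (g * (c * g)) := by
      rw [IsIdempotentElem, mul_assoc, ← mul_assoc (c * g), mul_assoc c, hg.1.eq, hh.eq]
    have hcorner : g * (g * (c * g)) * g = g * (c * g) := by
      rw [← mul_assoc, hg.1.eq, mul_assoc, mul_assoc c, hg.1.eq]
    refine (hg.eq_zero_or_eq hi hcorner).resolve_left fun h0 => he0 ?_
    calc e = e * g * c * g * c := by rw [hegc, hegc]
      _ = e * (g * g) * c * g * c := by rw [hg.1.eq]
      _ = e * g * (g * (c * g)) * c := by noncomm_ring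
      _ = 0 := by rw [h0, mul_zero, zero_mul]
  refine (cornerConjIdem_of_mul_eq_right hE he hh heE hhE ?_ ?_).trans hE
    (cornerConjIdem_of_mul_eq_left hE hh hg.1 hhE hgE ?_ hgcg)
  · rw [← mul_assoc, hec]
  · exact hcge
  · rw [mul_assoc, hg.1.eq]

theorem isConjIdem_iff_cornerConjIdem_one {x y : R} : IsConjIdem x y ↔ CornerConjIdem 1 x y := by
  constructor
  · rintro ⟨u, rfl⟩
    exact ⟨u, ↑u⁻¹, by simp, by simp, by simp, by simp, rfl⟩
  · rintro ⟨u, v, -, -, huv, hvu, rfl⟩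
    exact ⟨⟨u, v, huv, hvu⟩, rfl⟩

theorem isConjIdem_equivalence : Equivalence (IsConjIdem : R → R → Prop) where
  refl x := ⟨1, by simp⟩
  symm := fun ⟨u, h⟩ => ⟨u⁻¹, by simp [h, mul_assoc]⟩
  trans := fun ⟨u, h⟩ ⟨u', h'⟩ => ⟨u' * u, by simp [h, h', mul_assoc]⟩

theorem cornerConjIdem_equivalence (hE : IsIdempotentElem E) :
    Equivalence fun x y : {e : R // CornerPrimIdem E e} => CornerConjIdem E (x : R) (y : R) where
  refl x := CornerConjIdem.refl hE x.2.2.1.symm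
  symm {x _} h := h.symm x.2.2.1.symm
  trans h h' := h.trans hE h'

end CornerConjIdem

section LocalDecomp

variable {ι : Type*} {E d e f x y : R} {s : Finset ι} {g : ι → R}

structure IsLocalDecomp (E : R) (s : Finset ι) (g : ι → R) : Prop where
  isLocalIdem : ∀ i ∈ s, IsLocalIdem (g i)
  orthogonal : ∀ i ∈ s, ∀ j ∈ s, i ≠ j → g i * g j = 0
  sum_eq : ∑ i ∈ s, g i = E

theorem IsLocalDecomp.mul_left {i : ι} (h : IsLocalDecomp E s g) (hi : i ∈ s) :
    E * g i = g i := by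
  rw [← h.sum_eq, sum_mul, sum_eq_single i (fun j hj hji => h.orthogonal j hj i hi hji)
    (absurd hi), (h.isLocalIdem i hi).1.eq]

theorem IsLocalDecomp.mul_right {i : ι} (h : IsLocalDecomp E s g) (hi : i ∈ s) :
    g i * E = g i := by
  rw [← h.sum_eq, mul_sum, sum_eq_single i (fun j hj hji => h.orthogonal i hi j hj hji.symm)
    (absurd hi), (h.isLocalIdem i hi).1.eq]

theorem IsLocalDecomp.corner {i : ι} (h : IsLocalDecomp E s g) (hi : i ∈ s) :
    E * g i * E = g i := by
  rw [h.mul_left hi, h.mul_right hi]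

theorem IsLocalDecomp.exists_cornerConjIdem (h : IsLocalDecomp E s g) (hE : IsIdempotentElem E)
    (hf : IsLocalIdem f) (hfE : E * f * E = f) : ∃ i ∈ s, CornerConjIdem E f (g i) := by
  have hsum : ∑ i ∈ s, f * g i * f = f := by
    rw [← sum_mul, ← mul_sum, h.sum_eq, hE.right_mul_of_corner hfE, hf.1.eq]
  obtain ⟨i, hi, hu⟩ :=
    hf.exists_isCornerUnit_of_sum_eq (fun i _ => hf.1.corner_mul_mul (g i)) hsum
  exact ⟨i, hi, cornerConjIdem_of_isCornerUnit hE hf.1 hfE hf.2.1 (h.isLocalIdem i hi)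
    (h.corner hi) hu⟩

theorem IsLocalDecomp.cornerConjIdem_of_idemEquiv (h : IsLocalDecomp E s g)
    (hE : IsIdempotentElem E) (hx : IsLocalIdem x) (hy : IsLocalIdem y) (hxE : E * x * E = x)
    (hyE : E * y * E = y) (hxy : IdemEquiv x y) : CornerConjIdem E x y := by
  classical
  obtain ⟨i, hi, hxi⟩ := h.exists_cornerConjIdem hE hx hxE
  obtain ⟨j, hj, hyj⟩ := h.exists_cornerConjIdem hE hy hyE
  suffices hij : CornerConjIdem E (g i) (g j) from
    (hxi.trans hE hij).trans hE (hyj.symm hyE)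
  by_cases hij : i = j
  · subst hij
    exact CornerConjIdem.refl hE (h.corner hi)
  · refine cornerConjIdem_of_orthogonal hE (h.corner hi) (h.corner hj) (h.orthogonal i hi j hj hij)
      (h.orthogonal j hj i hi (Ne.symm hij)) ?_
    exact ((hxi.idemEquiv hE hx.1 hxE).symm.trans hxy).trans (hyj.idemEquiv hE hy.1 hyE)

theorem IsLocalDecomp.erase [DecidableEq ι] {j : ι} (h : IsLocalDecomp E s g) (hj : j ∈ s) :
    IsLocalDecomp (E - g j) (s.erase j) g where
  isLocalIdem i hi := h.isLocalIdem i (mem_of_mem_erase hi)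
  orthogonal i hi k hk := h.orthogonal i (mem_of_mem_erase hi) k (mem_of_mem_erase hk)
  sum_eq := by rw [← h.sum_eq, ← sum_erase_add s g hj, add_sub_cancel_right]

theorem isLocalDecomp_zero : IsLocalDecomp (0 : R) univ (Fin.elim0 : Fin 0 → R) where
  isLocalIdem i := i.elim0
  orthogonal i := i.elim0
  sum_eq := by simp

theorem IsLocalDecomp.cons {m : ℕ} {d : Fin m → R} (h : IsLocalDecomp e univ d)
    (hf : IsLocalIdem f) (hef : e * f = 0) (hfe : f * e = 0) :
    IsLocalDecomp (f + e) univ (Fin.cons f d : Fin (m + 1) → R) where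
  isLocalIdem i _ := Fin.cases hf (fun k => h.isLocalIdem k (mem_univ k)) i
  orthogonal i _ j _ hij := by
    have hfd (k : Fin m) : f * d k = 0 := by
      rw [← h.mul_left (mem_univ k), ← mul_assoc, hfe, zero_mul]
    have hdf (k : Fin m) : d k * f = 0 := by
      rw [← h.mul_right (mem_univ k), mul_assoc, hef, mul_zero]
    cases i using Fin.cases <;> cases j using Fin.cases
    · exact absurd rfl hij
    · simpa using hfd _
    · simpa using hdf _
    · simpa using h.orthogonal _ (mem_univ _) _ (mem_univ _) fun hk => hij (by rw [hk])
  sum_eq := by rw [Fin.sum_univ_succ]; simp [h.sum_eq]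

theorem IsLocalDecomp.of_cornerConjIdem (h : IsLocalDecomp e s g) (hE : IsIdempotentElem E)
    (heE : E * e * E = e) (hc : CornerConjIdem E e f) : ∃ g' : ι → R, IsLocalDecomp f s g' := by
  obtain ⟨u, v, hu, hv, huv, hvu, rfl⟩ := hc
  have hgE {i : ι} (hi : i ∈ s) : E * g i * E = g i := hE.corner_trans heE (h.corner hi)
  refine ⟨fun i => u * g i * v, fun i hi => ?_, fun i hi j hj hij => ?_, ?_⟩
  · exact (CornerConjIdem.idemEquiv hE (h.isLocalIdem i hi).1 (hgE hi)
      ⟨u, v, hu, hv, huv, hvu, rfl⟩).isLocalIdem (h.isLocalIdem i hi)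
  · rw [conj_mul_conj hvu (hE.right_mul_of_corner (hgE hi)), h.orthogonal i hi j hj hij,
      mul_zero, zero_mul]
  · rw [← sum_mul, ← mul_sum, h.sum_eq]

theorem IsLocalDecomp.exists_isLocalIdem_corner_or (h : IsLocalDecomp E s g)
    (hE : IsIdempotentElem E) (he : IsIdempotentElem e) (heE : E * e * E = e) (he0 : e ≠ 0) :
    ∃ d, IsLocalIdem d ∧ (e * d * e = d ∨ (E - e) * d * (E - e) = d) := by
  obtain ⟨i, hi⟩ : s.Nonempty := by
    refine nonempty_iff_ne_empty.mpr fun hs => he0 ?_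
    rw [← heE, ← h.sum_eq, hs, sum_empty, zero_mul, zero_mul]
  have hgi := h.isLocalIdem i hi
  have hcompl : g i - g i * e * g i = g i * (1 * (E - e) * 1) * g i := by
    rw [one_mul, mul_one, mul_sub, sub_mul, h.mul_right hi, hgi.1.eq]
  have hE' : IsIdempotentElem (E - e) :=
    he.sub hE (hE.right_mul_of_corner heE) (hE.left_mul_of_corner heE)
  -- `g i e g i + g i (E - e) g i = g i`, so one of the two is a unit of the local ring `g i R g i`.
  rcases hgi.2.2 e with hu | hu
  · obtain ⟨d, hd, hgd⟩ := IdemEquiv.exists_corner_of_isCornerUnit hgi.1 he (a := 1) (b := 1)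
      (by rw [one_mul_mul_one]; exact hu)
    exact ⟨d, hgd.isLocalIdem hgi, .inl hd⟩
  · obtain ⟨d, hd, hgd⟩ := IdemEquiv.exists_corner_of_isCornerUnit hgi.1 hE' (hcompl ▸ hu)
    exact ⟨d, hgd.isLocalIdem hgi, .inr hd⟩

theorem IsLocalDecomp.exists_cornerConjIdem_le_or_orthogonal (h : IsLocalDecomp E s g)
    (hE : IsIdempotentElem E) (he : IsIdempotentElem e) (heE : E * e * E = e) (he0 : e ≠ 0) :
    ∃ j ∈ s, ∃ f, CornerConjIdem E e f ∧
      (g j * f = g j ∧ f * g j = g j ∨ g j * f = 0 ∧ f * g j = 0) := by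
  obtain ⟨d, hd, hde⟩ := h.exists_isLocalIdem_corner_or hE he heE he0
  have hEe : E * e = e := hE.left_mul_of_corner heE
  have heE' : e * E = e := hE.right_mul_of_corner heE
  have hdE : E * d * E = d := by
    rcases hde with hde | hde
    · exact hE.corner_trans heE hde
    · refine hE.corner_trans ?_ hde
      simp only [mul_sub, sub_mul, hE.eq, heE]
  obtain ⟨j, hj, u, v, hu, hv, huv, hvu, hgj⟩ := h.exists_cornerConjIdem hE hd hdE
  refine ⟨j, hj, u * e * v, ⟨u, v, hu, hv, huv, hvu, rfl⟩, ?_⟩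
  rw [hgj, conj_mul_conj hvu (hE.right_mul_of_corner hdE), conj_mul_conj hvu heE']
  rcases hde with hde | hde
  · rw [he.right_mul_of_corner hde, he.left_mul_of_corner hde]
    exact .inl ⟨rfl, rfl⟩
  · have hde' : d * e = 0 := by
      have : (E - e) * e = 0 := by rw [sub_mul, hEe, he.eq, sub_self]
      calc d * e = (E - e) * d * ((E - e) * e) := by rw [← mul_assoc, hde]
        _ = 0 := by rw [this, mul_zero]
    have hed : e * d = 0 := by
      have : e * (E - e) = 0 := by rw [mul_sub, heE', he.eq, sub_self]
      calc e * d = e * ((E - e) * d * (E - e)) := by rw [hde]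
        _ = e * (E - e) * (d * (E - e)) := by noncomm_ring
        _ = 0 := by rw [this, zero_mul]
    rw [hde', hed, mul_zero, zero_mul]
    exact .inr ⟨rfl, rfl⟩

theorem IsLocalDecomp.exists_of_corner [DecidableEq ι] (h : IsLocalDecomp E s g)
    (hE : IsIdempotentElem E) (he : IsIdempotentElem e) (heE : E * e * E = e) :
    ∃ (m : ℕ) (d : Fin m → R), IsLocalDecomp e univ d := by
  -- Conjugate `e` to some `f` that contains or is orthogonal to a `g j`; then `f - g j` or `f`
  -- lies under `E - g j`, which is decomposed by `s.erase j`.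
  induction s using Finset.strongInduction generalizing E e with
  | H s ih =>
  by_cases he0 : e = 0
  · exact ⟨0, Fin.elim0, he0 ▸ isLocalDecomp_zero⟩
  obtain ⟨j, hj, f, hc, hf⟩ := h.exists_cornerConjIdem_le_or_orthogonal hE he heE he0
  suffices ∃ (m : ℕ) (d : Fin m → R), IsLocalDecomp f univ d by
    obtain ⟨m, d, hd⟩ := this
    exact ⟨m, hd.of_cornerConjIdem hE (hc.corner hE) (hc.symm heE)⟩
  have hf' : IsIdempotentElem f := (hc.idemEquiv hE he heE).2.1
  have hEf : E * f = f := hE.left_mul_of_corner (hc.corner hE)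
  have hfE : f * E = f := hE.right_mul_of_corner (hc.corner hE)
  have hg := (h.isLocalIdem j hj).1
  have hE' : IsIdempotentElem (E - g j) := hg.sub hE (h.mul_right hj) (h.mul_left hj)
  rcases hf with ⟨h₁, h₂⟩ | ⟨h₁, h₂⟩
  · have hcorner : (E - g j) * (f - g j) * (E - g j) = f - g j := by
      simp only [sub_mul, mul_sub, hEf, hfE, h.mul_left hj, h.mul_right hj, h₁, h₂, hg.eq]
      abel
    obtain ⟨m, d, hd⟩ := ih _ (erase_ssubset hj) (h.erase hj) hE' (hg.sub hf' h₁ h₂) hcorner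
    refine ⟨m + 1, _, add_sub_cancel (g j) f ▸ hd.cons (h.isLocalIdem j hj) ?_ ?_⟩
    · rw [sub_mul, h₂, hg.eq, sub_self]
    · rw [mul_sub, h₁, hg.eq, sub_self]
  · have hcorner : (E - g j) * f * (E - g j) = f := by
      simp only [sub_mul, mul_sub, hEf, hfE, h₁, h₂, zero_mul]
      abel
    exact ih _ (erase_ssubset hj) (h.erase hj) hE' hf' hcorner

theorem IsLocalIdem.cornerPrimIdem (hl : IsLocalIdem x) (hxE : E * x * E = x) :
    CornerPrimIdem E x := by
  refine ⟨hl.1, hxE.symm, hl.2.1, fun a b ha hb _ _ hab hba ha0 hb0 hsum => ?_⟩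
  have hax : a * x = a := by rw [← hsum, mul_add, ha.eq, hab, add_zero]
  have hxa : x * a = a := by rw [← hsum, add_mul, ha.eq, hba, add_zero]
  rcases hl.eq_zero_or_eq ha (by rw [hxa, hax]) with rfl | rfl
  · exact ha0 rfl
  · exact hb0 (by rw [← add_sub_cancel_left a b, hsum, sub_self])

theorem CornerPrimIdem.eq_of_corner (hx : CornerPrimIdem E x) (hE : IsIdempotentElem E)
    (hd : IsIdempotentElem d) (hd0 : d ≠ 0) (hdx : x * d * x = d) : d = x := by
  by_contra hne
  have hxd : x * d = d := hx.1.left_mul_of_corner hdx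
  have hdx' : d * x = d := hx.1.right_mul_of_corner hdx
  refine hx.2.2.2 d (x - d) hd (hd.sub hx.1 hdx' hxd) (hE.corner_trans hx.2.1.symm hdx).symm ?_
    ?_ ?_ hd0 (sub_ne_zero.mpr (Ne.symm hne)) (add_sub_cancel d x)
  · rw [mul_sub, sub_mul, ← hx.2.1, hE.corner_trans hx.2.1.symm hdx]
  · rw [mul_sub, hdx', hd.eq, sub_self]
  · rw [sub_mul, hxd, hd.eq, sub_self]

theorem IsLocalDecomp.isLocalIdem_of_cornerPrimIdem (h : IsLocalDecomp E s g)
    (hE : IsIdempotentElem E) (hx : CornerPrimIdem E x) : IsLocalIdem x := by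
  classical
  obtain ⟨m, d, hd⟩ := h.exists_of_corner hE hx.1 hx.2.1.symm
  cases m with
  | zero => exact absurd (by simpa using hd.sum_eq.symm) hx.2.2.1
  | succ m =>
    have hd0 := hd.isLocalIdem 0 (mem_univ 0)
    rwa [← hx.eq_of_corner hE hd0.1 hd0.2.1 (hd.corner (mem_univ 0))]

theorem isPrimitiveIdem_iff_cornerPrimIdem_one : IsPrimitiveIdem x ↔ CornerPrimIdem 1 x := by
  simp only [IsPrimitiveIdem, CornerPrimIdem, one_mul, mul_one, true_and, forall_const]

end LocalDecomp

section RingHom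

variable {S : Type*} [Ring S] (φ : R →+* S) {ι : Type*} {E e x y z : R} {s : Finset ι}
    {g : ι → R}

theorem IsCornerUnit.map (h : IsCornerUnit e z) : IsCornerUnit (φ e) (φ z) := by
  obtain ⟨y, hy, h₁, h₂⟩ := h
  exact ⟨φ y, by rw [← map_mul, ← map_mul, ← hy], by rw [← map_mul, h₁], by rw [← map_mul, h₂]⟩

theorem IsLocalIdem.map (hφ : Function.Surjective φ) (hl : IsLocalIdem e) (h0 : φ e ≠ 0) :
    IsLocalIdem (φ e) := by
  refine ⟨hl.1.map φ, h0, fun z => ?_⟩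
  obtain ⟨z, rfl⟩ := hφ z
  have h := (hl.2.2 z).imp (IsCornerUnit.map φ) (IsCornerUnit.map φ)
  simp only [map_mul, map_sub] at h
  exact h

theorem IsLocalDecomp.map (hφ : Function.Surjective φ) (h : IsLocalDecomp E s g) :
    ∃ t : Finset ι, IsLocalDecomp (φ E) t (fun i => φ (g i)) := by
  classical
  refine ⟨s.filter fun i => φ (g i) ≠ 0, ⟨fun i hi => ?_, fun i hi j hj hij => ?_, ?_⟩⟩
  · rw [mem_filter] at hi
    exact (h.isLocalIdem i hi.1).map φ hφ hi.2
  · rw [← map_mul, h.orthogonal i (mem_filter.mp hi).1 j (mem_filter.mp hj).1 hij, map_zero]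
  · rw [sum_filter_ne_zero, ← map_sum, h.sum_eq]

theorem IdemEquiv.of_map (hφ : Function.Surjective φ) {e₁ e₂ : R} (h₁ : IsLocalIdem e₁)
    (h₂ : IsLocalIdem e₂) (h0 : φ e₂ ≠ 0) (h : IdemEquiv (φ e₁) (φ e₂)) : IdemEquiv e₁ e₂ := by
  obtain ⟨P, Q, -, hQP, -, -, hQ₂, hQ₁⟩ := h.exists_absorbing
  obtain ⟨p, rfl⟩ := hφ P
  obtain ⟨q, rfl⟩ := hφ Q
  set p' := e₁ * p * e₂
  set q' := e₂ * q * e₁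
  have hw : e₂ * (q' * p') * e₂ = q' * p' := by
    simp only [p', q', ← mul_assoc, h₂.1.eq]
    simp only [mul_assoc, h₂.1.eq]
  have hφw : φ (q' * p') = φ e₂ := by
    simp only [p', q', map_mul, ← mul_assoc, hQ₂, hQ₁, hQP, (h₂.1.map φ).eq]
  -- `e₂ - q'p'` maps to `0`, so it is not a unit of `e₂Re₂`; hence `q'p'` is one.
  rcases h₂.isCornerUnit_or hw with ⟨c, -, hc, -⟩ | ⟨c, -, hc, -⟩
  · have hf : IdemEquiv e₂ (p' * c * q') := IdemEquiv.of_mul_eq h₂.1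
      (by simp only [q', ← mul_assoc, h₂.1.eq]) (by rw [← mul_assoc, hc])
    have hfe : e₁ * (p' * c * q') * e₁ = p' * c * q' := by
      simp only [p', q', ← mul_assoc, h₁.1.eq]
      simp only [mul_assoc, h₁.1.eq]
    rcases h₁.eq_zero_or_eq hf.2.1 hfe with hf0 | hf1
    · exact absurd hf0 (hf.ne_zero h₂.2.1)
    · exact hf1 ▸ hf.symm
  · refine absurd ?_ h0
    rw [← hc, map_mul, map_sub, hφw, sub_self, zero_mul]

theorem IsConjIdem.map (φ : R →+* S) (h : IsConjIdem x y) : IsConjIdem (φ x) (φ y) := by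
  obtain ⟨u, rfl⟩ := h
  exact ⟨Units.map φ.toMonoidHom u, by simp⟩

end RingHom

section IdealGen

variable (ξ : R) {x y : R}

theorem memIdealGen_iff_mem_span : MemIdealGen ξ x ↔ x ∈ TwoSidedIdeal.span {ξ} := by
  constructor
  · rintro ⟨n, a, b, rfl⟩
    exact TwoSidedIdeal.finsetSum_mem _ _ _ fun i _ => TwoSidedIdeal.mul_mem_right _ _ _
      (TwoSidedIdeal.mul_mem_left _ _ _ (TwoSidedIdeal.subset_span rfl))
  · intro hx
    induction hx using TwoSidedIdeal.span_induction with
    | mem x hx => exact ⟨1, fun _ => 1, fun _ => 1, by simp [Set.mem_singleton_iff.mp hx]⟩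
    | zero => exact ⟨0, Fin.elim0, Fin.elim0, by simp⟩
    | add x y _ _ hx hy =>
      obtain ⟨n, a, b, rfl⟩ := hx
      obtain ⟨m, a', b', rfl⟩ := hy
      exact ⟨n + m, Fin.append a a', Fin.append b b', by simp [Fin.sum_univ_add]⟩
    | neg x _ hx =>
      obtain ⟨n, a, b, rfl⟩ := hx
      exact ⟨n, fun i => -a i, b, by simp⟩
    | left_absorb r x _ hx =>
      obtain ⟨n, a, b, rfl⟩ := hx
      exact ⟨n, fun i => r * a i, b, by simp [mul_sum, mul_assoc]⟩
    | right_absorb r x _ hx =>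
      obtain ⟨n, a, b, rfl⟩ := hx
      exact ⟨n, a, fun i => b i * r, by simp [sum_mul, mul_assoc]⟩

abbrev mkIdealGen : R →+* (TwoSidedIdeal.span {ξ}).ringCon.Quotient :=
  (TwoSidedIdeal.span {ξ}).ringCon.mk'

theorem mkIdealGen_surjective : Function.Surjective (mkIdealGen ξ) :=
  RingCon.mk'_surjective _

theorem memIdealGen_iff_mkIdealGen_eq_zero : MemIdealGen ξ x ↔ mkIdealGen ξ x = 0 := by
  rw [memIdealGen_iff_mem_span, ← TwoSidedIdeal.mem_ker, TwoSidedIdeal.ker_ringCon_mk']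

theorem memIdealGen_sub_iff : MemIdealGen ξ (x - y) ↔ mkIdealGen ξ x = mkIdealGen ξ y := by
  rw [memIdealGen_iff_mkIdealGen_eq_zero, map_sub, sub_eq_zero]

theorem modIdem_iff_isIdempotentElem : ModIdem ξ x ↔ IsIdempotentElem (mkIdealGen ξ x) := by
  rw [ModIdem, memIdealGen_sub_iff, map_mul, IsIdempotentElem]

theorem modPrimIdem_iff_isPrimitiveIdem :
    ModPrimIdem ξ x ↔ IsPrimitiveIdem (mkIdealGen ξ x) := by
  simp only [ModPrimIdem, IsPrimitiveIdem, modIdem_iff_isIdempotentElem,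
    memIdealGen_iff_mkIdealGen_eq_zero, map_mul, map_add, map_sub, sub_eq_zero,
    (mkIdealGen_surjective ξ).forall]

theorem modConjIdem_iff_isConjIdem :
    ModConjIdem ξ x y ↔ IsConjIdem (mkIdealGen ξ x) (mkIdealGen ξ y) := by
  simp only [ModConjIdem, memIdealGen_sub_iff, map_mul, map_one]
  constructor
  · rintro ⟨u, v, huv, hvu, h⟩
    exact ⟨⟨_, _, huv, hvu⟩, h.symm⟩
  · rintro ⟨U, hU⟩
    obtain ⟨u, hu⟩ := mkIdealGen_surjective ξ U
    obtain ⟨v, hv⟩ := mkIdealGen_surjective ξ ↑U⁻¹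
    exact ⟨u, v, by rw [hu, hv, U.mul_inv], by rw [hu, hv, U.inv_mul], by rw [hu, hv, hU]⟩

theorem modConjIdem_equivalence :
    Equivalence fun x y : {e : R // ModPrimIdem ξ e} => ModConjIdem ξ (x : R) (y : R) := by
  simp only [modConjIdem_iff_isConjIdem]
  exact InvImage.equivalence _ _ isConjIdem_equivalence

end IdealGen

section IdealGenLocal

variable {ξ e x y : R}

theorem memIdealGen_of_corner (hx : ξ * x * ξ = x) : MemIdealGen ξ x :=
  ⟨1, fun _ => 1, fun _ => x * ξ, by rw [Fin.sum_univ_one, one_mul, ← mul_assoc, hx]⟩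

theorem MemIdealGen.of_idemEquiv (hx : MemIdealGen ξ x) (h : IdemEquiv x y) :
    MemIdealGen ξ y := by
  obtain ⟨-, hy, p, q, hpq, hqp⟩ := h
  have : y = q * x * p := by rw [← hpq, ← hy.eq, ← hqp]; noncomm_ring
  rw [memIdealGen_iff_mem_span] at hx ⊢
  exact this ▸ TwoSidedIdeal.mul_mem_right _ _ _ (TwoSidedIdeal.mul_mem_left _ _ _ hx)

theorem IsLocalIdem.exists_cornerPrimIdem_idemEquiv (he : IsLocalIdem e) (hξ : IsIdempotentElem ξ)
    (hm : MemIdealGen ξ e) : ∃ f, CornerPrimIdem ξ f ∧ IdemEquiv e f := by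
  obtain ⟨n, a, b, hsum⟩ := hm
  have hsum' : ∑ i, e * (a i * ξ * b i) * e = e := by
    rw [← sum_mul, ← mul_sum, ← hsum, he.1.eq, he.1.eq]
  obtain ⟨i, -, hu⟩ :=
    he.exists_isCornerUnit_of_sum_eq (fun i _ => he.1.corner_mul_mul (a i * ξ * b i)) hsum'
  obtain ⟨f, hfξ, hef⟩ := IdemEquiv.exists_corner_of_isCornerUnit he.1 hξ hu
  exact ⟨f, (hef.isLocalIdem he).cornerPrimIdem hfξ, hef⟩

theorem IsLocalIdem.modPrimIdem (he : IsLocalIdem e) (hm : ¬ MemIdealGen ξ e) :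
    ModPrimIdem ξ e := by
  rw [modPrimIdem_iff_isPrimitiveIdem, isPrimitiveIdem_iff_cornerPrimIdem_one]
  refine (he.map _ (mkIdealGen_surjective ξ) ?_).cornerPrimIdem (one_mul_mul_one _)
  exact fun h0 => hm ((memIdealGen_iff_mkIdealGen_eq_zero ξ).mpr h0)

end IdealGenLocal

end

theorem quot_mk_eq_iff {α : Type*} {r : α → α → Prop} (h : Equivalence r) {a b : α} :
    Quot.mk r a = Quot.mk r b ↔ r a b :=
  Quot.eq.trans h.eqvGen_iff

theorem exists_quotEquiv_of_surjective {α β : Type*} {r : α → α → Prop} (f : α → β)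
    (hf : ∀ a b, f a = f b ↔ r a b) (hs : Function.Surjective f) :
    ∃ φ : Quot r ≃ β, ∀ a, φ (Quot.mk r a) = f a := by
  refine ⟨Equiv.ofBijective (Quot.lift f fun a b h => (hf a b).mpr h) ⟨?_, ?_⟩, fun _ => rfl⟩
  · rintro ⟨a⟩ ⟨b⟩ h
    exact Quot.sound ((hf a b).mp h)
  · intro b
    obtain ⟨a, rfl⟩ := hs b
    exact ⟨Quot.mk r a, rfl⟩

namespace SemiperfectRing'

variable {A : Type*} [Ring A] {ξ e f x : A}

theorem exists_isLocalDecomp (hA : SemiperfectRing' A) :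
    ∃ (n : ℕ) (g : Fin n → A), IsLocalDecomp 1 univ g :=
  let ⟨n, g, hl, ho, hs⟩ := hA
  ⟨n, g, ⟨fun i _ => hl i, fun i _ j _ => ho i j, hs⟩⟩

theorem exists_isLocalDecomp_corner (hA : SemiperfectRing' A) (hξ : IsIdempotentElem ξ) :
    ∃ (m : ℕ) (d : Fin m → A), IsLocalDecomp ξ univ d :=
  let ⟨_, _, hg⟩ := hA.exists_isLocalDecomp
  hg.exists_of_corner IsIdempotentElem.one hξ (one_mul_mul_one _)

theorem cornerPrimIdem_iff_isLocalIdem (hA : SemiperfectRing' A) (hξ : IsIdempotentElem ξ) :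
    CornerPrimIdem ξ e ↔ IsLocalIdem e ∧ ξ * e * ξ = e := by
  obtain ⟨m, d, hd⟩ := hA.exists_isLocalDecomp_corner hξ
  exact ⟨fun h => ⟨hd.isLocalIdem_of_cornerPrimIdem hξ h, h.2.1.symm⟩,
    fun h => h.1.cornerPrimIdem h.2⟩

theorem isPrimitiveIdem_iff_isLocalIdem (hA : SemiperfectRing' A) :
    IsPrimitiveIdem e ↔ IsLocalIdem e := by
  rw [isPrimitiveIdem_iff_cornerPrimIdem_one,
    hA.cornerPrimIdem_iff_isLocalIdem IsIdempotentElem.one, one_mul_mul_one, and_iff_left rfl]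

theorem cornerConjIdem_iff_idemEquiv (hA : SemiperfectRing' A) (hξ : IsIdempotentElem ξ)
    (he : CornerPrimIdem ξ e) (hf : CornerPrimIdem ξ f) :
    CornerConjIdem ξ e f ↔ IdemEquiv e f := by
  obtain ⟨m, d, hd⟩ := hA.exists_isLocalDecomp_corner hξ
  refine ⟨fun h => h.idemEquiv hξ he.1 he.2.1.symm, fun h => ?_⟩
  exact hd.cornerConjIdem_of_idemEquiv hξ (hd.isLocalIdem_of_cornerPrimIdem hξ he)
    (hd.isLocalIdem_of_cornerPrimIdem hξ hf) he.2.1.symm hf.2.1.symm h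

theorem isConjIdem_iff_idemEquiv (hA : SemiperfectRing' A) (he : IsLocalIdem e)
    (hf : IsLocalIdem f) : IsConjIdem e f ↔ IdemEquiv e f := by
  rw [isConjIdem_iff_cornerConjIdem_one, hA.cornerConjIdem_iff_idemEquiv IsIdempotentElem.one
    (he.cornerPrimIdem (one_mul_mul_one e)) (hf.cornerPrimIdem (one_mul_mul_one f))]

theorem modConjIdem_iff_idemEquiv (hA : SemiperfectRing' A) (he : IsLocalIdem e)
    (hf : IsLocalIdem f) (hm : ¬ MemIdealGen ξ f) : ModConjIdem ξ e f ↔ IdemEquiv e f := by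
  rw [modConjIdem_iff_isConjIdem, isConjIdem_iff_cornerConjIdem_one]
  refine ⟨fun h => ?_, fun h => ?_⟩
  · refine .of_map _ (mkIdealGen_surjective ξ) he hf ?_ ?_
    · exact fun h0 => hm ((memIdealGen_iff_mkIdealGen_eq_zero ξ).mpr h0)
    · exact h.idemEquiv IsIdempotentElem.one (he.1.map _) (one_mul_mul_one _)
  · exact isConjIdem_iff_cornerConjIdem_one.mp (((hA.isConjIdem_iff_idemEquiv he hf).mpr h).map _)

theorem exists_modConjIdem (hA : SemiperfectRing' A) (hx : ModPrimIdem ξ x) :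
    ∃ e, IsLocalIdem e ∧ ¬ MemIdealGen ξ e ∧ ModConjIdem ξ e x := by
  obtain ⟨n, g, hg⟩ := hA.exists_isLocalDecomp
  obtain ⟨t, ht⟩ := hg.map (mkIdealGen ξ) (mkIdealGen_surjective ξ)
  rw [map_one] at ht
  have hxl : IsLocalIdem (mkIdealGen ξ x) := ht.isLocalIdem_of_cornerPrimIdem IsIdempotentElem.one
    (isPrimitiveIdem_iff_cornerPrimIdem_one.mp ((modPrimIdem_iff_isPrimitiveIdem ξ).mp hx))
  obtain ⟨i, hi, hc⟩ := ht.exists_cornerConjIdem IsIdempotentElem.one hxl (one_mul_mul_one _)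
  refine ⟨g i, hg.isLocalIdem i (mem_univ i), fun hm => (ht.isLocalIdem i hi).2.1
    ((memIdealGen_iff_mkIdealGen_eq_zero ξ).mp hm), ?_⟩
  rw [modConjIdem_iff_isConjIdem, isConjIdem_iff_cornerConjIdem_one]
  exact hc.symm (one_mul_mul_one _)

abbrev CornerPrimClass (ξ : A) :=
  Quot fun x y : {e : A // CornerPrimIdem ξ e} => CornerConjIdem ξ (x : A) (y : A)

abbrev ModPrimClass (ξ : A) :=
  Quot fun x y : {e : A // ModPrimIdem ξ e} => ModConjIdem ξ (x : A) (y : A)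

theorem exists_cornerRep (hA : SemiperfectRing' A) (hξ : IsIdempotentElem ξ)
    (e : {e : A // IsPrimitiveIdem e}) (hm : MemIdealGen ξ (e : A)) :
    ∃ f, CornerPrimIdem ξ f ∧ IdemEquiv (e : A) f :=
  (hA.isPrimitiveIdem_iff_isLocalIdem.mp e.2).exists_cornerPrimIdem_idemEquiv hξ hm

open Classical in
noncomputable def primClass (hA : SemiperfectRing' A) (hξ : IsIdempotentElem ξ)
    (e : {e : A // IsPrimitiveIdem e}) : CornerPrimClass ξ ⊕ ModPrimClass ξ :=
  if hm : MemIdealGen ξ (e : A) then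
    .inl (Quot.mk _ ⟨_, (hA.exists_cornerRep hξ e hm).choose_spec.1⟩)
  else
    .inr (Quot.mk _ ⟨e, (hA.isPrimitiveIdem_iff_isLocalIdem.mp e.2).modPrimIdem hm⟩)

variable (hA : SemiperfectRing' A) (hξ : IsIdempotentElem ξ) {e : {e : A // IsPrimitiveIdem e}}

theorem primClass_of_mem (hm : MemIdealGen ξ (e : A)) :
    hA.primClass hξ e = .inl (Quot.mk _ ⟨_, (hA.exists_cornerRep hξ e hm).choose_spec.1⟩) :=
  dif_pos hm

theorem primClass_of_not_mem (hm : ¬ MemIdealGen ξ (e : A)) :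
    hA.primClass hξ e =
      .inr (Quot.mk _ ⟨e, (hA.isPrimitiveIdem_iff_isLocalIdem.mp e.2).modPrimIdem hm⟩) :=
  dif_neg hm

theorem primClass_eq_iff (e e' : {e : A // IsPrimitiveIdem e}) :
    hA.primClass hξ e = hA.primClass hξ e' ↔ IsConjIdem (e : A) e' := by
  have hl := hA.isPrimitiveIdem_iff_isLocalIdem.mp e.2
  have hl' := hA.isPrimitiveIdem_iff_isLocalIdem.mp e'.2
  rw [hA.isConjIdem_iff_idemEquiv hl hl']
  by_cases hm : MemIdealGen ξ (e : A) <;> by_cases hm' : MemIdealGen ξ (e' : A)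
  · have hc := (hA.exists_cornerRep hξ e hm).choose_spec
    have hc' := (hA.exists_cornerRep hξ e' hm').choose_spec
    rw [primClass_of_mem hA hξ hm, primClass_of_mem hA hξ hm', Sum.inl.injEq,
      quot_mk_eq_iff (cornerConjIdem_equivalence hξ), hA.cornerConjIdem_iff_idemEquiv hξ hc.1 hc'.1]
    exact ⟨fun h => (hc.2.trans h).trans hc'.2.symm, fun h => (hc.2.symm.trans h).trans hc'.2⟩
  · rw [primClass_of_mem hA hξ hm, primClass_of_not_mem hA hξ hm']
    exact iff_of_false Sum.inl_ne_inr fun h => hm' (hm.of_idemEquiv h)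
  · rw [primClass_of_not_mem hA hξ hm, primClass_of_mem hA hξ hm']
    exact iff_of_false Sum.inr_ne_inl fun h => hm (hm'.of_idemEquiv h.symm)
  · rw [primClass_of_not_mem hA hξ hm, primClass_of_not_mem hA hξ hm', Sum.inr.injEq,
      quot_mk_eq_iff (modConjIdem_equivalence ξ),
      hA.modConjIdem_iff_idemEquiv hl hl' hm']

theorem primClass_surjective : Function.Surjective (hA.primClass hξ) := by
  rintro (⟨⟨f, hf⟩⟩ | ⟨⟨x, hx⟩⟩)
  · obtain ⟨hfl, hfξ⟩ := (hA.cornerPrimIdem_iff_isLocalIdem hξ).mp hf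
    let e : {e : A // IsPrimitiveIdem e} := ⟨f, hA.isPrimitiveIdem_iff_isLocalIdem.mpr hfl⟩
    have hm : MemIdealGen ξ (e : A) := memIdealGen_of_corner hfξ
    have hc := (hA.exists_cornerRep hξ e hm).choose_spec
    refine ⟨e, ?_⟩
    rw [primClass_of_mem hA hξ hm]
    exact congrArg Sum.inl
      (Quot.sound ((hA.cornerConjIdem_iff_idemEquiv hξ hc.1 hf).mpr hc.2.symm))
  · obtain ⟨e, hel, hm, hc⟩ := hA.exists_modConjIdem hx
    refine ⟨⟨e, hA.isPrimitiveIdem_iff_isLocalIdem.mpr hel⟩, ?_⟩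
    rw [primClass_of_not_mem hA hξ hm]
    exact congrArg Sum.inr (Quot.sound hc)

end SemiperfectRing'

/-- **Classification of primitive idempotents via a corner.**  Let `A` be a semiperfect
ring and `ξ ∈ A` an idempotent.  There is a bijection between the set of conjugacy
classes of primitive idempotents of `A` and the disjoint union of the set of conjugacy
classes of primitive idempotents of the corner ring `ξAξ` and the set of conjugacy
classes of primitive idempotents of the quotient ring `A/(AξA)`.  It sends the class of
a primitive idempotent `e` lying in `AξA` to the class (in `ξAξ`) of a conjugate of `e`
lying in `ξAξ`, and the class of a primitive idempotent `e ∉ AξA` to the class of its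
image in `A/(AξA)`. -/
theorem semiperfect_corner_classification {A : Type*} [Ring A]
    (hA : SemiperfectRing' A) (ξ : A) (hξ : IsIdempotentElem ξ) :
    ∃ φ : Quot (fun x y : {e : A // IsPrimitiveIdem e} => IsConjIdem (x : A) (y : A)) ≃
        (Quot (fun x y : {e : A // CornerPrimIdem ξ e} => CornerConjIdem ξ (x : A) (y : A)) ⊕
         Quot (fun x y : {e : A // ModPrimIdem ξ e} => ModConjIdem ξ (x : A) (y : A))),
      (∀ e : {e : A // IsPrimitiveIdem e}, MemIdealGen ξ (e : A) →
        ∃ e' : {x : A // CornerPrimIdem ξ x}, IsConjIdem (e : A) (e' : A) ∧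
          φ (Quot.mk _ e) = Sum.inl (Quot.mk _ e')) ∧
      (∀ e : {e : A // IsPrimitiveIdem e}, ¬ MemIdealGen ξ (e : A) →
        ∃ e' : {x : A // ModPrimIdem ξ x}, (e' : A) = (e : A) ∧
          φ (Quot.mk _ e) = Sum.inr (Quot.mk _ e')) := by
  obtain ⟨φ, hφ⟩ := exists_quotEquiv_of_surjective (hA.primClass hξ) (hA.primClass_eq_iff hξ)
    (hA.primClass_surjective hξ)
  refine ⟨φ, fun e hm => ?_, fun e hm => ⟨_, rfl, by rw [hφ, hA.primClass_of_not_mem hξ hm]⟩⟩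
  have hc := (hA.exists_cornerRep hξ e hm).choose_spec
  refine ⟨⟨_, hc.1⟩, ?_, by rw [hφ, hA.primClass_of_mem hξ hm]⟩
  exact (hA.isConjIdem_iff_idemEquiv (hA.isPrimitiveIdem_iff_isLocalIdem.mp e.2)
    ((hA.cornerPrimIdem_iff_isLocalIdem hξ).mp hc.1).1).mpr hc.2
end

section
/- Let m, n ∈ ℕ with a = m + 1 and b = 2n + 2, and let μ be a partition whose conjugate μᵗ satisfies μᵗ_i + μᵗ_{b+1−i} > m for all 1 ≤ i ≤ n + 1. Then there exists a partition λ ⊆ μ such that λ is ((m+1) × (2n+2))-self-dual in conjugate coordinates, namely λᵗ_{b+1} = 0 and λᵗ_i + λᵗ_{b+1−i} = m + 1 for all 1 ≤ i ≤ b. Conversely, if some ((m+1) × (2n+2))-self-dual λ (in this sense) is contained in μ, then μᵗ_i + μᵗ_{b+1−i} > m for all 1 ≤ i ≤ n + 1. -/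
/-- A partition `λ = (λ₁ ≥ λ₂ ≥ ⋯)`, encoded by `p : ℕ → ℕ` with `p i = λ_{i+1}`. -/
structure Partn where
  p : ℕ → ℕ
  antitone : ∀ i j, i ≤ j → p j ≤ p i
  fin_supp : ∃ N, ∀ i, N ≤ i → p i = 0

/-- The `k`-th part of the conjugate (transpose) partition, for `k ≥ 1`:
`λᵗ_k` is the number of parts of `λ` that are `≥ k`. -/
noncomputable def Partn.tconj (lam : Partn) (k : ℕ) : ℕ :=
  Set.ncard {j : ℕ | k ≤ lam.p j}

namespace Partn

lemma ncard_Iio (t : ℕ) : (Set.Iio t).ncard = t := by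
  rw [show Set.Iio t = ((Finset.range t : Finset ℕ) : Set ℕ) by ext x; simp,
    Set.ncard_coe_finset]
  simp

lemma finite_set (q : Partn) {k : ℕ} (hk : 1 ≤ k) : {j : ℕ | k ≤ q.p j}.Finite := by
  obtain ⟨N, hN⟩ := q.fin_supp
  apply (Set.finite_Iio N).subset
  intro j hj
  by_contra h
  simp only [Set.mem_Iio, not_lt] at h
  have := hN j h
  simp only [Set.mem_setOf_eq, this] at hj
  omega

lemma lt_tconj_iff (q : Partn) {k : ℕ} (hk : 1 ≤ k) (j : ℕ) :
    j < q.tconj k ↔ k ≤ q.p j := by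
  have hfin := q.finite_set hk
  constructor
  · intro h
    by_contra hc
    push_neg at hc
    have hsub : {j' : ℕ | k ≤ q.p j'} ⊆ Set.Iio j := by
      intro j' hj'
      by_contra h'
      simp only [Set.mem_Iio, not_lt] at h'
      exact absurd (le_trans hj' (q.antitone j j' h')) (not_le.2 hc)
    have := Set.ncard_le_ncard hsub (Set.finite_Iio j)
    rw [ncard_Iio] at this
    unfold tconj at h
    omega
  · intro h
    have hsub : Set.Iio (j + 1) ⊆ {j' : ℕ | k ≤ q.p j'} := by
      intro j' hj'
      simp only [Set.mem_Iio] at hj'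
      exact le_trans h (q.antitone j' j (by omega))
    have := Set.ncard_le_ncard hsub hfin
    rw [ncard_Iio] at this
    unfold tconj
    omega

lemma tconj_antitone (q : Partn) {k k' : ℕ} (hk : 1 ≤ k) (h : k ≤ k') :
    q.tconj k' ≤ q.tconj k :=
  Set.ncard_le_ncard (fun j hj => le_trans h hj) (q.finite_set hk)

lemma tconj_mono_of_le {q r : Partn} (h : ∀ j, q.p j ≤ r.p j) {k : ℕ} (hk : 1 ≤ k) :
    q.tconj k ≤ r.tconj k :=
  Set.ncard_le_ncard (fun j hj => le_trans hj (h j)) (r.finite_set hk)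

/-- The conjugate partition, as a `Partn`. -/
noncomputable def conj (q : Partn) : Partn where
  p j := q.tconj (j + 1)
  antitone i j hij := q.tconj_antitone (by omega) (by omega)
  fin_supp := ⟨q.p 0, fun i hi => by
    have he : {j : ℕ | i + 1 ≤ q.p j} = ∅ := by
      ext j
      simp only [Set.mem_setOf_eq, Set.mem_empty_iff_false, iff_false, not_le]
      have := q.antitone 0 j (by omega)
      omega
    simp only [tconj, he, Set.ncard_empty]⟩

lemma conj_tconj (q : Partn) {k : ℕ} (hk : 1 ≤ k) : q.conj.tconj k = q.p (k - 1) := by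
  have he : {j : ℕ | k ≤ q.conj.p j} = Set.Iio (q.p (k - 1)) := by
    ext j
    simp only [conj, Set.mem_setOf_eq, Set.mem_Iio]
    rw [show (k ≤ q.tconj (j + 1)) ↔ (k - 1 < q.tconj (j + 1)) from by omega,
      q.lt_tconj_iff (by omega : 1 ≤ j + 1) (k - 1)]
    omega
  rw [tconj, he, ncard_Iio]

end Partn

/-- Let `m, n ∈ ℕ`, `b = 2n+2`.  A partition `μ` satisfies
`μᵗ_i + μᵗ_{b+1-i} > m` for all `1 ≤ i ≤ n+1` if and only if there exists a partition
`λ ⊆ μ` that is `((m+1) × (2n+2))`-self-dual in conjugate coordinates, i.e.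
`λᵗ_{b+1} = 0` and `λᵗ_i + λᵗ_{b+1-i} = m+1` for all `1 ≤ i ≤ b`. -/
theorem selfdual_contained_iff (m n : ℕ) (mu : Partn) :
    (∃ lam : Partn, (∀ j, lam.p j ≤ mu.p j) ∧
        lam.tconj (2 * n + 2 + 1) = 0 ∧
        (∀ i, 1 ≤ i → i ≤ 2 * n + 2 →
          lam.tconj i + lam.tconj (2 * n + 2 + 1 - i) = m + 1)) ↔
    (∀ i, 1 ≤ i → i ≤ n + 1 →
      m < mu.tconj i + mu.tconj (2 * n + 2 + 1 - i)) := by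
  constructor
  · rintro ⟨lam, hsub, _, hsum⟩ i h1 h2
    have hi2 : 1 ≤ 2 * n + 2 + 1 - i := by omega
    have ha := Partn.tconj_mono_of_le hsub h1
    have hb := Partn.tconj_mono_of_le hsub hi2
    have := hsum i h1 (by omega)
    omega
  · intro H
    -- the truncated conjugate parts
    set d : ℕ → ℕ := fun k => min (mu.tconj k) (m + 1) with hd_def
    have hdle : ∀ k, d k ≤ m + 1 := fun k => min_le_right _ _
    have hdmu : ∀ k, d k ≤ mu.tconj k := fun k => min_le_left _ _
    have hdanti : ∀ k k', 1 ≤ k → k ≤ k' → d k' ≤ d k := by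
      intro k k' h1 h2
      have := mu.tconj_antitone h1 h2
      simp only [hd_def]
      omega
    have hdsum : ∀ k, 1 ≤ k → k ≤ 2 * n + 2 → m + 1 ≤ d k + d (2 * n + 2 + 1 - k) := by
      intro k h1 h2
      rcases le_or_gt k (n + 1) with h | h
      · have := H k h1 h
        simp only [hd_def]
        omega
      · have := H (2 * n + 2 + 1 - k) (by omega) (by omega)
        rw [show 2 * n + 2 + 1 - (2 * n + 2 + 1 - k) = k from by omega] at this
        simp only [hd_def]
        omega
    -- the self-dual conjugate profile
    set c : ℕ → ℕ := fun k =>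
      if k ≤ n + 1 then d k else if k ≤ 2 * n + 2 then m + 1 - d (2 * n + 2 + 1 - k) else 0
      with hc_def
    have hcanti : ∀ k, 1 ≤ k → c (k + 1) ≤ c k := by
      intro k h1
      simp only [hc_def]
      rcases le_or_gt (k + 1) (n + 1) with h | h
      · rw [if_pos h, if_pos (by omega)]
        exact hdanti k (k + 1) h1 (by omega)
      · rcases le_or_gt (k + 1) (2 * n + 2) with h' | h'
        · rw [if_neg (by omega), if_pos h']
          rcases le_or_gt k (n + 1) with hk | hk
          · -- k = n + 1
            have hkeq : k = n + 1 := by omega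
            rw [if_pos hk, hkeq]
            have hs := hdsum (n + 1) (by omega) (by omega)
            have := hdanti (n + 1) (n + 2) (by omega) (by omega)
            rw [show 2 * n + 2 + 1 - (n + 1) = n + 2 from by omega] at hs
            rw [show 2 * n + 2 + 1 - (n + 1 + 1) = n + 1 from by omega]
            omega
          · rw [if_neg (by omega), if_pos (by omega)]
            have := hdanti (2 * n + 2 + 1 - (k + 1)) (2 * n + 2 + 1 - k) (by omega) (by omega)
            omega
        · rw [if_neg (by omega), if_neg (by omega)]
          omega
    have hcanti' : ∀ i j, i ≤ j → c (j + 1) ≤ c (i + 1) := by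
      intro i j hij
      induction j with
      | zero => rw [Nat.le_zero.mp hij]
      | succ j ih =>
        rcases Nat.lt_or_ge i (j + 1) with h | h
        · exact le_trans (hcanti (j + 1) (by omega)) (ih (by omega))
        · rw [show i = j + 1 from by omega]
    have hcmu : ∀ k, 1 ≤ k → c k ≤ mu.tconj k := by
      intro k h1
      simp only [hc_def]
      rcases le_or_gt k (n + 1) with h | h
      · rw [if_pos h]; exact hdmu k
      · rcases le_or_gt k (2 * n + 2) with h' | h'
        · rw [if_neg (by omega), if_pos h']
          have hs := hdsum k (by omega) h'
          have := hdmu k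
          omega
        · rw [if_neg (by omega), if_neg (by omega)]
          omega
    set cp : Partn := ⟨fun i => c (i + 1), hcanti', ⟨2 * n + 2, fun i hi => by
      simp only [hc_def]
      rw [if_neg (by omega), if_neg (by omega)]⟩⟩ with hcp_def
    refine ⟨cp.conj, ?_, ?_, ?_⟩
    · intro j
      have h1 : cp.conj.p j = cp.tconj (j + 1) := rfl
      have h2 : cp.tconj (j + 1) ≤ mu.conj.tconj (j + 1) := by
        apply Partn.tconj_mono_of_le _ (by omega : 1 ≤ j + 1)
        intro i
        exact hcmu (i + 1) (by omega)
      have h3 : mu.conj.tconj (j + 1) = mu.p j := by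
        rw [mu.conj_tconj (by omega : 1 ≤ j + 1)]
        congr 1
      rw [h1, ← h3]
      exact h2
    · rw [cp.conj_tconj (by omega : 1 ≤ 2 * n + 2 + 1)]
      show c (2 * n + 2 + 1 - 1 + 1) = 0
      simp only [hc_def]
      rw [if_neg (by omega), if_neg (by omega)]
    · intro i h1 h2
      rw [cp.conj_tconj (by omega : 1 ≤ i),
        cp.conj_tconj (by omega : 1 ≤ 2 * n + 2 + 1 - i)]
      show c (i - 1 + 1) + c (2 * n + 2 + 1 - i - 1 + 1) = m + 1
      rw [show i - 1 + 1 = i from by omega,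
        show 2 * n + 2 + 1 - i - 1 + 1 = 2 * n + 2 + 1 - i from by omega]
      simp only [hc_def]
      rcases le_or_gt i (n + 1) with h | h
      · rw [if_pos h, if_neg (by omega : ¬ 2 * n + 2 + 1 - i ≤ n + 1),
          if_pos (by omega : 2 * n + 2 + 1 - i ≤ 2 * n + 2),
          show 2 * n + 2 + 1 - (2 * n + 2 + 1 - i) = i from by omega]
        have := hdle i
        omega
      · rw [if_neg (by omega), if_pos h2, if_pos (by omega : 2 * n + 2 + 1 - i ≤ n + 1)]
        have := hdle (2 * n + 2 + 1 - i)
        omega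
end

section
/- Let a, b ∈ ℕ with b even, and let λ be a partition satisfying λ_{a+1} = 0 and λ_i + λ_{a+1−i} ≥ b for all 1 ≤ i ≤ a. Define μ by μ_i = min(b, λ_i) for 1 ≤ i ≤ ⌊a/2⌋, μ_{a+1−i} = b − μ_i for 1 ≤ i ≤ ⌊a/2⌋, and μ_{(a+1)/2} = b/2 if a is odd. Then μ is a partition, μ ⊆ λ, and μ is (a × b)-self-dual. -/
/-- `λ_i` for `i ≥ 1`. -/
def Partn.part (lam : Partn) (i : ℕ) : ℕ := lam.p (i - 1)

theorem Partn.part_antitone (lam : Partn) : Antitone lam.part :=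
  fun _ _ hij => lam.antitone _ _ (Nat.sub_le_sub_right hij 1)

theorem Partn.le_two_mul_min_part {a b i : ℕ} (lam : Partn) (hi : i ≤ a / 2)
    (hge : b ≤ lam.part i + lam.part (a + 1 - i)) : b ≤ 2 * min b (lam.part i) := by
  have := lam.part_antitone (show i ≤ a + 1 - i by omega)
  omega

section SelfDual

variable {a b : ℕ} {mu : ℕ → ℕ}

theorem eq_half_of_add_one_eq_two_mul (h3 : Odd a → mu ((a + 1) / 2) = b / 2) {i : ℕ}
    (hi : a + 1 = 2 * i) : mu i = b / 2 := by
  rw [show i = (a + 1) / 2 by omega]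
  exact h3 ⟨i - 1, by omega⟩

theorem add_reflect_eq_of_le_half {lam : Partn}
    (h1 : ∀ i, 1 ≤ i → i ≤ a / 2 → mu i = min b (lam.part i))
    (h2 : ∀ i, 1 ≤ i → i ≤ a / 2 → mu (a + 1 - i) = b - mu i)
    {i : ℕ} (hi : 1 ≤ i) (hia : i ≤ a / 2) : mu i + mu (a + 1 - i) = b := by
  have : mu i ≤ b := (h1 i hi hia).trans_le (min_le_left _ _)
  rw [h2 i hi hia]
  omega

theorem add_reflect_eq {lam : Partn} (hb : Even b)
    (h1 : ∀ i, 1 ≤ i → i ≤ a / 2 → mu i = min b (lam.part i))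
    (h2 : ∀ i, 1 ≤ i → i ≤ a / 2 → mu (a + 1 - i) = b - mu i)
    (h3 : Odd a → mu ((a + 1) / 2) = b / 2)
    {i : ℕ} (hi : 1 ≤ i) (hia : i ≤ a) : mu i + mu (a + 1 - i) = b := by
  rcases le_or_gt i (a / 2) with hlow | hhigh
  · exact add_reflect_eq_of_le_half h1 h2 hi hlow
  by_cases hmid : a + 1 = 2 * i
  · rw [show a + 1 - i = i by omega, eq_half_of_add_one_eq_two_mul h3 hmid]
    exact (Nat.two_mul _).symm.trans (Nat.two_mul_div_two_of_even hb)
  · have := add_reflect_eq_of_le_half h1 h2 (i := a + 1 - i) (by omega) (by omega)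
    rwa [Nat.sub_sub_self (by omega), add_comm] at this

theorem succ_le_of_reflect_succ_le
    (hdual : ∀ i, 1 ≤ i → i ≤ a → mu i + mu (a + 1 - i) = b)
    {i : ℕ} (hi : 1 ≤ i) (hia : i < a) (h : mu (a + 1 - i) ≤ mu (a - i)) :
    mu (i + 1) ≤ mu i := by
  have hdual_i := hdual i hi hia.le
  have hsucc := hdual (i + 1) (by omega) hia
  rw [show a + 1 - (i + 1) = a - i by omega] at hsucc
  omega

theorem succ_le_of_le_half {lam : Partn}
    (hge : ∀ i, 1 ≤ i → i ≤ a → b ≤ lam.part i + lam.part (a + 1 - i))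
    (h1 : ∀ i, 1 ≤ i → i ≤ a / 2 → mu i = min b (lam.part i))
    (h3 : Odd a → mu ((a + 1) / 2) = b / 2)
    (hdual : ∀ i, 1 ≤ i → i ≤ a → mu i + mu (a + 1 - i) = b)
    {i : ℕ} (hi : 1 ≤ i) (hia : i ≤ a / 2) : mu (i + 1) ≤ mu i := by
  by_cases hnext : i + 1 ≤ a / 2
  · rw [h1 i hi hia, h1 (i + 1) (by omega) hnext]
    exact min_le_min_left b (lam.part_antitone i.le_succ)
  have hcentre : b ≤ 2 * mu i := by
    rw [h1 i hi hia]
    exact lam.le_two_mul_min_part hia (hge i hi (by omega))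
  rcases Nat.even_or_odd' a with ⟨k, rfl | rfl⟩
  · have := hdual i hi (by omega)
    rw [show 2 * k + 1 - i = i + 1 by omega] at this
    omega
  · rw [eq_half_of_add_one_eq_two_mul h3 (by omega)]
    omega

theorem le_part_of_le {lam : Partn}
    (hge : ∀ i, 1 ≤ i → i ≤ a → b ≤ lam.part i + lam.part (a + 1 - i))
    (h1 : ∀ i, 1 ≤ i → i ≤ a / 2 → mu i = min b (lam.part i))
    (h2 : ∀ i, 1 ≤ i → i ≤ a / 2 → mu (a + 1 - i) = b - mu i)
    (h3 : Odd a → mu ((a + 1) / 2) = b / 2)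
    {i : ℕ} (hi : 1 ≤ i) (hia : i ≤ a) : mu i ≤ lam.part i := by
  rcases le_or_gt i (a / 2) with hlow | hhigh
  · exact (h1 i hi hlow).trans_le (min_le_right _ _)
  by_cases hmid : a + 1 = 2 * i
  · have := hge i hi hia
    rw [show a + 1 - i = i by omega] at this
    rw [eq_half_of_add_one_eq_two_mul h3 hmid]
    omega
  · set j := a + 1 - i
    have hge_j := hge j (by omega) (by omega)
    have hmu_j := h2 j (by omega) (by omega)
    rw [h1 j (by omega) (by omega), show a + 1 - j = i by omega] at hmu_j
    rw [show a + 1 - j = i by omega] at hge_j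
    omega

end SelfDual

theorem truncation_selfdual_general (a b : ℕ) (hb : Even b) (lam : Partn)
    (hge : ∀ i, 1 ≤ i → i ≤ a → b ≤ lam.part i + lam.part (a + 1 - i))
    (mu : ℕ → ℕ)
    (h1 : ∀ i, 1 ≤ i → i ≤ a / 2 → mu i = min b (lam.part i))
    (h2 : ∀ i, 1 ≤ i → i ≤ a / 2 → mu (a + 1 - i) = b - mu i)
    (h3 : Odd a → mu ((a + 1) / 2) = b / 2)
    (h4 : ∀ j, a < j → mu j = 0) :
    (∀ i, 1 ≤ i → mu (i + 1) ≤ mu i) ∧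
    (∀ i, 1 ≤ i → mu i ≤ lam.part i) ∧
    (∀ i, 1 ≤ i → i ≤ a → mu i + mu (a + 1 - i) = b) ∧
    mu (a + 1) = 0 := by
  have hdual : ∀ i, 1 ≤ i → i ≤ a → mu i + mu (a + 1 - i) = b :=
    fun i hi hia => add_reflect_eq hb h1 h2 h3 hi hia
  have hlow : ∀ i, 1 ≤ i → i ≤ a / 2 → mu (i + 1) ≤ mu i :=
    fun i hi hia => succ_le_of_le_half hge h1 h3 hdual hi hia
  refine ⟨fun i hi => ?_, fun i hi => ?_, hdual, h4 (a + 1) a.lt_succ_self⟩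
  · rcases le_or_gt a i with hai | hia
    · simp [h4 (i + 1) (by omega)]
    rcases le_or_gt i (a / 2) with hhalf | hhalf
    · exact hlow i hi hhalf
    · refine succ_le_of_reflect_succ_le hdual hi hia ?_
      simpa [show a - i + 1 = a + 1 - i by omega] using hlow (a - i) (by omega) (by omega)
  · rcases le_or_gt i a with hia | hai
    · exact le_part_of_le hge h1 h2 h3 hi hia
    · simp [h4 i hai]

/-- Let `b` be even and `λ` a partition with `λ_{a+1} = 0` and `λ_i + λ_{a+1-i} ≥ b` for
`1 ≤ i ≤ a`.  Define `μ` by `μ_i = min b λ_i` for `1 ≤ i ≤ ⌊a/2⌋`,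
`μ_{a+1-i} = b - μ_i` for `1 ≤ i ≤ ⌊a/2⌋`, `μ_{(a+1)/2} = b/2` if `a` is odd, and
`μ_j = 0` for `j > a`.  Then `μ` is a partition (weakly decreasing), `μ ⊆ λ`, and `μ`
is `(a × b)`-self-dual. -/
theorem truncation_selfdual (a b : ℕ) (hb : Even b) (lam : Partn)
    (h0 : lam.part (a + 1) = 0)
    (hge : ∀ i, 1 ≤ i → i ≤ a → b ≤ lam.part i + lam.part (a + 1 - i))
    (mu : ℕ → ℕ)
    (h1 : ∀ i, 1 ≤ i → i ≤ a / 2 → mu i = min b (lam.part i))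
    (h2 : ∀ i, 1 ≤ i → i ≤ a / 2 → mu (a + 1 - i) = b - mu i)
    (h3 : Odd a → mu ((a + 1) / 2) = b / 2)
    (h4 : ∀ j, a < j → mu j = 0) :
    (∀ i, 1 ≤ i → mu (i + 1) ≤ mu i) ∧
    (∀ i, 1 ≤ i → mu i ≤ lam.part i) ∧
    (∀ i, 1 ≤ i → i ≤ a → mu i + mu (a + 1 - i) = b) ∧
    mu (a + 1) = 0 :=
  truncation_selfdual_general a b hb lam hge mu h1 h2 h3 h4
end

section
/- Let M be a Krull–Schmidt k-linear category over a field k, let 1 be an object with End(1) ≅ k, and let Z, Z' be indecomposable objects of M with M(1,Z) ≠ 0 and M(1,Z') ≠ 0. Suppose M(1,Z) is a simple module over End(Z) and M(1,Z') is a simple module over End(Z'). If the trace submodules Tr_Z M_1 and Tr_{Z'} M_1 coincide, then Z ≅ Z'. (Here Tr_S M_1(X) is the span of all composites 1 → W → X with W ∈ S.) -/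
/-!
A nonzero `f : 𝟙 ⟶ Z` lies in `Tr_Z = Tr_{Z'}`, and since `M(𝟙, Z')` is cyclic over `End Z'`
on any nonzero `f' : 𝟙 ⟶ Z'`, every element of `Tr_{Z'} M(𝟙, Z)` has the form `f' ≫ u`; so
`f = f' ≫ u` and symmetrically `f' = f ≫ v`. Then `f ≫ (v ≫ u) = f`, so `1 - v ≫ u` kills
`f ≠ 0` and is not a unit of the local ring `End Z`, forcing `v ≫ u` to be invertible.
Likewise `u ≫ v` is invertible, and `v` is an isomorphism.
-/

open CategoryTheory Limits

namespace CategoryTheory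

section Trace

variable (k : Type*) [Semiring k] {C : Type*} [Category C] [Preadditive C] [Linear k C]

/-- The component at `X` of the trace submodule `Tr_Z M_one`. -/
def traceSubmodule (one Z X : C) : Submodule k (one ⟶ X) :=
  Submodule.span k {f | ∃ (g : one ⟶ Z) (h : Z ⟶ X), f = g ≫ h}

variable {k}

lemma mem_traceSubmodule_self {one Z : C} (f : one ⟶ Z) : f ∈ traceSubmodule k one Z Z :=
  Submodule.subset_span ⟨f, 𝟙 Z, (Category.comp_id f).symm⟩

lemma exists_eq_comp_of_mem_traceSubmodule {one Z X : C} (f : one ⟶ Z)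
    (hf : ∀ g : one ⟶ Z, ∃ e : Z ⟶ Z, g = f ≫ e) {x : one ⟶ X}
    (hx : x ∈ traceSubmodule k one Z X) : ∃ u : Z ⟶ X, x = f ≫ u := by
  induction hx using Submodule.span_induction with
  | mem y hy =>
    obtain ⟨g, h, rfl⟩ := hy
    obtain ⟨e, rfl⟩ := hf g
    exact ⟨e ≫ h, Category.assoc f e h⟩
  | zero => exact ⟨0, comp_zero.symm⟩
  | add a b _ _ ha hb =>
    obtain ⟨u, rfl⟩ := ha
    obtain ⟨v, rfl⟩ := hb
    exact ⟨u + v, (Preadditive.comp_add _ _ _ _ _ _).symm⟩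
  | smul c a _ ha =>
    obtain ⟨u, rfl⟩ := ha
    exact ⟨c • u, (Linear.comp_smul _ _ _ _ _ _).symm⟩

end Trace

variable {C : Type*} [Category C]

lemma isIso_of_comp_eq_self [Preadditive C] {one Z : C} [IsLocalRing (End Z)]
    {f : one ⟶ Z} (hf : f ≠ 0) {w : Z ⟶ Z} (hw : f ≫ w = f) : IsIso w := by
  rcases IsLocalRing.isUnit_or_isUnit_of_add_one (add_sub_cancel (show End Z from w) 1) with
    hunit | hunit
  · exact (isUnit_iff_isIso w).1 hunit
  · have : IsIso (𝟙 Z - w) := (isUnit_iff_isIso _).1 hunit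
    refine absurd ((cancel_mono (𝟙 Z - w)).1 ?_) hf
    rw [Preadditive.comp_sub, Category.comp_id, hw, sub_self, zero_comp]

lemma isIso_of_isIso_comp_of_isIso_comp {X Y : C} (v : X ⟶ Y) (u : Y ⟶ X)
    [IsIso (v ≫ u)] [IsIso (u ≫ v)] : IsIso v :=
  have : IsSplitMono v :=
    IsSplitMono.mk' ⟨u ≫ inv (v ≫ u), by rw [← Category.assoc, IsIso.hom_inv_id]⟩
  have : Epi v := epi_of_epi u v
  isIso_of_epi_of_isSplitMono v

end CategoryTheory

theorem trace_submodule_eq_iff_iso_general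
    (k : Type*) [Field k] (C : Type*) [Category C] [Preadditive C] [Linear k C]
    (one : C)
    (Z Z' : C)
    (hZloc : IsLocalRing (End Z)) (hZ'loc : IsLocalRing (End Z'))
    (hZne : ∃ f : one ⟶ Z, f ≠ 0) (hZ'ne : ∃ f : one ⟶ Z', f ≠ 0)
    (hZsimple : ∀ f : one ⟶ Z, f ≠ 0 → ∀ g : one ⟶ Z, ∃ e : Z ⟶ Z, g = f ≫ e)
    (hZ'simple : ∀ f : one ⟶ Z', f ≠ 0 → ∀ g : one ⟶ Z', ∃ e : Z' ⟶ Z', g = f ≫ e)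
    (htr : ∀ X : C,
      Submodule.span k {f : one ⟶ X | ∃ (g : one ⟶ Z) (h : Z ⟶ X), f = g ≫ h} =
      Submodule.span k {f : one ⟶ X | ∃ (g : one ⟶ Z') (h : Z' ⟶ X), f = g ≫ h}) :
    Nonempty (Z ≅ Z') := by
  have htr : ∀ X, traceSubmodule k one Z X = traceSubmodule k one Z' X := htr
  obtain ⟨f, hf⟩ := hZne
  obtain ⟨f', hf'⟩ := hZ'ne
  obtain ⟨u, hu⟩ : ∃ u : Z' ⟶ Z, f = f' ≫ u :=
    exists_eq_comp_of_mem_traceSubmodule f' (hZ'simple f' hf')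
      (htr Z ▸ mem_traceSubmodule_self f)
  obtain ⟨v, hv⟩ : ∃ v : Z ⟶ Z', f' = f ≫ v :=
    exists_eq_comp_of_mem_traceSubmodule f (hZsimple f hf)
      ((htr Z').symm ▸ mem_traceSubmodule_self f')
  have : IsIso (v ≫ u) := isIso_of_comp_eq_self hf (by rw [← Category.assoc, ← hv, ← hu])
  have : IsIso (u ≫ v) := isIso_of_comp_eq_self hf' (by rw [← Category.assoc, ← hu, ← hv])
  have : IsIso v := isIso_of_isIso_comp_of_isIso_comp v u
  exact ⟨asIso v⟩

/-- **Distinct trace submodules.**  Let `M` be a Krull–Schmidt `k`-linear category over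
a field `k` (every object is a finite biproduct of objects with local endomorphism
rings), with an object `𝟙` whose endomorphism ring is `k`.  Let `Z, Z'` be
indecomposable objects (hence with local endomorphism rings) admitting nonzero morphisms
from `𝟙`, such that `M(𝟙,Z)` is a simple `End(Z)`-module and `M(𝟙,Z')` is a simple
`End(Z')`-module.  If the trace submodules `Tr_Z M_𝟙` and `Tr_{Z'} M_𝟙` of
`M_𝟙 = ⊕_X M(𝟙,X)` coincide, then `Z ≅ Z'`. -/
theorem trace_submodule_eq_iff_iso
    (k : Type*) [Field k] (C : Type*) [Category C] [Preadditive C] [Linear k C]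
    [HasFiniteBiproducts C] [HasBinaryBiproducts C]
    (one : C) (hone : ∀ f : one ⟶ one, ∃ c : k, f = c • 𝟙 one)
    (hKS : ∀ X : C, ∃ (n : ℕ) (D : Fin n → C),
      (∀ i, IsLocalRing (End (D i))) ∧ Nonempty (X ≅ ⨁ D))
    (Z Z' : C)
    (hZind : ¬ IsZero Z ∧ ∀ Y W : C, Nonempty (Z ≅ Y ⊞ W) → IsZero Y ∨ IsZero W)
    (hZ'ind : ¬ IsZero Z' ∧ ∀ Y W : C, Nonempty (Z' ≅ Y ⊞ W) → IsZero Y ∨ IsZero W)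
    (hZloc : IsLocalRing (End Z)) (hZ'loc : IsLocalRing (End Z'))
    (hZne : ∃ f : one ⟶ Z, f ≠ 0) (hZ'ne : ∃ f : one ⟶ Z', f ≠ 0)
    (hZsimple : ∀ f : one ⟶ Z, f ≠ 0 → ∀ g : one ⟶ Z, ∃ e : Z ⟶ Z, g = f ≫ e)
    (hZ'simple : ∀ f : one ⟶ Z', f ≠ 0 → ∀ g : one ⟶ Z', ∃ e : Z' ⟶ Z', g = f ≫ e)
    (htr : ∀ X : C,
      Submodule.span k {f : one ⟶ X | ∃ (g : one ⟶ Z) (h : Z ⟶ X), f = g ≫ h} =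
      Submodule.span k {f : one ⟶ X | ∃ (g : one ⟶ Z') (h : Z' ⟶ X), f = g ≫ h}) :
    Nonempty (Z ≅ Z') :=
  trace_submodule_eq_iff_iso_general k C one Z Z' hZloc hZ'loc hZne hZ'ne hZsimple hZ'simple htr
end
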